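/- (Mapping theorem, SU(2) instance with only time dependence retained.) Let g > 0, let φ : ℝ → ℝ be twice differentiable, and define the gauge field A^a_0(x) = 0 and A^a_i(x) = δ^a_i φ(x₀) for a, i ∈ {1,2,3} (some components zero, all others equal). Then A satisfies the sourceless classical SU(2) Yang–Mills equations if and only if φ''(t) + 2g² φ(t)³ = 0, i.e. A is an extremum of the Yang–Mills action exactly when φ is an extremum of the massless quartic scalar action with coupling λ = N g², N = 2. -/
import Mathlib


open Real

/-- Partial derivative of `f : ℝ⁴ → ℝ` in the `μ`-th coordinate direction. -/
noncomputable def pd (i : Fin 4) (f : (Fin 4 → ℝ) → ℝ) (x : Fin 4 → ℝ) : ℝ :=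
  deriv (fun t : ℝ => f (Function.update x i t)) (x i)

/-- The Minkowski metric `η = diag(1, -1, -1, -1)` (diagonal entries). -/
noncomputable def eta (μ : Fin 4) : ℝ := if μ = 0 then 1 else -1

/-- The Levi-Civita symbol `ε^{abc}` on three indices (structure constants of SU(2)). -/
noncomputable def eps (a b c : Fin 3) : ℝ :=
  ((b.val : ℝ) - (a.val : ℝ)) * ((c.val : ℝ) - (a.val : ℝ)) * ((c.val : ℝ) - (b.val : ℝ)) / 2

/-- The sourceless classical SU(2) Yang–Mills equations in Minkowski space for a
field `A^a_ν : ℝ⁴ → ℝ` (color index `a : Fin 3`, Lorentz index `ν : Fin 4`):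
`∂^μ∂_μ A^a_ν - ∂_ν(∂^μ A^a_μ) + g ε^{abc} A^{bμ}(∂_μ A^c_ν - ∂_ν A^c_μ)
 + g ε^{abc} ∂^μ(A^b_μ A^c_ν) + g² ε^{abc} ε^{cde} A^{bμ} A^d_μ A^e_ν = 0`. -/
def IsYMSolution (g : ℝ) (A : Fin 3 → Fin 4 → (Fin 4 → ℝ) → ℝ) : Prop :=
  ∀ (a : Fin 3) (ν : Fin 4) (x : Fin 4 → ℝ),
    (∑ μ : Fin 4, eta μ * pd μ (pd μ (A a ν)) x)
      - pd ν (fun z => ∑ μ : Fin 4, eta μ * pd μ (A a μ) z) x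
      + g * ∑ b : Fin 3, ∑ c : Fin 3, ∑ μ : Fin 4,
          eps a b c * (eta μ * A b μ x) * (pd μ (A c ν) x - pd ν (A c μ) x)
      + g * ∑ b : Fin 3, ∑ c : Fin 3, ∑ μ : Fin 4,
          eps a b c * (eta μ * pd μ (fun z => A b μ z * A c ν z) x)
      + g ^ 2 * ∑ b : Fin 3, ∑ c : Fin 3, ∑ d : Fin 3, ∑ e : Fin 3, ∑ μ : Fin 4,
          eps a b c * eps c d e * (eta μ * A b μ x) * A d μ x * A e ν x
      = 0

lemma pd_comp (i : Fin 4) (f : ℝ → ℝ) :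
    pd i (fun z => f (z 0)) = fun x => if i = 0 then deriv f (x 0) else 0 := by
  funext x
  unfold pd
  by_cases h : i = 0
  · subst h; simp [Function.update_self]
  · simp [h, Function.update_of_ne (Ne.symm h)]

lemma pd_const (i : Fin 4) (c : ℝ) : pd i (fun _ => c) = fun _ => 0 := by
  funext x; unfold pd; simp

lemma pd_mul (i : Fin 4) (f g : ℝ → ℝ) :
    pd i (fun z => f (z 0) * g (z 0)) = fun x => if i = 0 then deriv (fun t => f t * g t) (x 0) else 0 :=
  pd_comp i (fun t => f t * g t)

set_option maxHeartbeats 4000000 in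
lemma lhs_eval (g : ℝ) (φ : ℝ → ℝ) (a : Fin 3) (ν : Fin 4) (x : Fin 4 → ℝ)
    (A : Fin 3 → Fin 4 → (Fin 4 → ℝ) → ℝ)
    (hA : A = fun a ν x => if ν.val = a.val + 1 then φ (x 0) else 0) :
    (∑ μ : Fin 4, eta μ * pd μ (pd μ (A a ν)) x)
      - pd ν (fun z => ∑ μ : Fin 4, eta μ * pd μ (A a μ) z) x
      + g * ∑ b : Fin 3, ∑ c : Fin 3, ∑ μ : Fin 4,
          eps a b c * (eta μ * A b μ x) * (pd μ (A c ν) x - pd ν (A c μ) x)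
      + g * ∑ b : Fin 3, ∑ c : Fin 3, ∑ μ : Fin 4,
          eps a b c * (eta μ * pd μ (fun z => A b μ z * A c ν z) x)
      + g ^ 2 * ∑ b : Fin 3, ∑ c : Fin 3, ∑ d : Fin 3, ∑ e : Fin 3, ∑ μ : Fin 4,
          eps a b c * eps c d e * (eta μ * A b μ x) * A d μ x * A e ν x
      = (if ν.val = a.val + 1 then (1:ℝ) else 0)
          * (deriv (deriv φ) (x 0) + 2 * g ^ 2 * φ (x 0) ^ 3) := by
  subst hA
  fin_cases a <;> fin_cases ν <;>
    · simp only [Fin.sum_univ_three, Fin.sum_univ_four]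
      simp (config := { decide := true }) [pd_comp, pd_const, pd_mul, eps, eta]
      try ring

/-- Mapping theorem (SU(2) instance, only time dependence retained): the gauge field
`A^a_0 = 0`, `A^a_i = δ^a_i φ(x₀)` satisfies the sourceless classical SU(2)
Yang–Mills equations if and only if `φ'' + 2g²φ³ = 0`, i.e. `A` is an extremum of
the Yang–Mills action exactly when `φ` is an extremum of the massless quartic
scalar action with coupling `λ = N g²`, `N = 2`. -/
theorem mapping_theorem_su2
    (g : ℝ) (hg : 0 < g)
    (φ : ℝ → ℝ) (hφ : Differentiable ℝ φ) (hφ' : Differentiable ℝ (deriv φ))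
    (A : Fin 3 → Fin 4 → (Fin 4 → ℝ) → ℝ)
    (hA : A = fun a ν x => if ν.val = a.val + 1 then φ (x 0) else 0) :
    IsYMSolution g A ↔ ∀ t : ℝ, deriv (deriv φ) t + 2 * g ^ 2 * φ t ^ 3 = 0 := by
  unfold IsYMSolution
  constructor
  · intro h t
    have h1 := h 0 1 (fun _ => t)
    rw [lhs_eval g φ 0 1 (fun _ => t) A hA] at h1
    simpa using h1
  · intro h a ν x
    rw [lhs_eval g φ a ν x A hA, h (x 0), mul_zero]
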